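/- arXiv:0708.0553 — 9 statements merged into one kernel-verified Lean document; each statement's English description precedes it below -/
import Mathlib

section
/- Let R be a commutative ring of prime characteristic p, and let W be a module over the skew polynomial ring R{F} (i.e., an R-module equipped with an additive map F : W → W satisfying F(ru) = r^p F(u) for all r ∈ R, u ∈ W). If F acts injectively on W, then for every F-stable R-submodule V of W (i.e., F(V) ⊆ V), the annihilator Ann_R(V) is a radical ideal of R. -/
theorem Submodule.mem_annihilator_of_pow_mem_of_injective {R W : Type*}
    [CommSemiring R] [AddCommMonoid W] [Module R W] {p : ℕ} {F : W →+ W}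
    (hF : ∀ (r : R) (u : W), F (r • u) = r ^ p • F u) (hinj : Function.Injective F)
    {V : Submodule R W} (hV : ∀ v ∈ V, F v ∈ V) {r : R} (hr : r ^ p ∈ V.annihilator) :
    r ∈ V.annihilator := by
  refine Submodule.mem_annihilator.2 fun v hv => hinj ?_
  rw [hF, map_zero]
  exact Submodule.mem_annihilator.1 hr _ (hV v hv)

theorem stmt0_general (R : Type) [CommRing R] (p : ℕ) (hp : p.Prime)
    (W : Type) [AddCommGroup W] [Module R W] (F : W →+ W)
    (hF : ∀ (r : R) (u : W), F (r • u) = r ^ p • F u)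
    (hinj : Function.Injective F)
    (V : Submodule R W) (hV : ∀ v ∈ V, F v ∈ V) :
    V.annihilator.IsRadical :=
  (Ideal.isRadical_iff_pow_one_lt p hp.one_lt).2 fun _ =>
    Submodule.mem_annihilator_of_pow_mem_of_injective hF hinj hV

/-- If `F` is a Frobenius-semilinear endomorphism of an `R`-module `W` (over a commutative
ring `R` of prime characteristic `p`) which acts injectively, then the annihilator of every
`F`-stable submodule `V` of `W` is a radical ideal of `R`. -/
theorem stmt0 (R : Type) [CommRing R] (p : ℕ) (hp : p.Prime) [CharP R p]
    (W : Type) [AddCommGroup W] [Module R W] (F : W →+ W)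
    (hF : ∀ (r : R) (u : W), F (r • u) = r ^ p • F u)
    (hinj : Function.Injective F)
    (V : Submodule R W) (hV : ∀ v ∈ V, F v ∈ V) :
    V.annihilator.IsRadical :=
  stmt0_general R p hp W F hF hinj V hV
end

section
/- Let R → S be a pure map of R-modules where S is an R-algebra (R → S pure means M → S ⊗_R M is injective for every R-module M). Let M be an R-module and let N ⊆ N' be R-submodules of M with N ≠ N'. Then the image of S ⊗_R N in S ⊗_R M is strictly contained in the image of S ⊗_R N' in S ⊗_R M. -/
open TensorProduct

/-- If `R → S` is a pure map of `R`-modules (`S` an `R`-algebra) and `N ⊊ N'` are submodules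
of an `R`-module `M`, then the image of `S ⊗ N` in `S ⊗ M` is strictly contained in the image
of `S ⊗ N'`. -/
theorem stmt3 (R S : Type) [CommRing R] [CommRing S] [Algebra R S]
    (hpure : ∀ (T : Type) [AddCommGroup T] [Module R T],
        Function.Injective (fun t : T => ((1 : S) ⊗ₜ[R] t : S ⊗[R] T)))
    (M : Type) [AddCommGroup M] [Module R M]
    (N N' : Submodule R M) (hle : N ≤ N') (hne : N ≠ N') :
    LinearMap.range (LinearMap.lTensor S N.subtype) <
      LinearMap.range (LinearMap.lTensor S N'.subtype) := by
  constructor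
  · -- ≤
    rintro y ⟨z, rfl⟩
    refine ⟨LinearMap.lTensor S (Submodule.inclusion hle) z, ?_⟩
    rw [← LinearMap.comp_apply, ← LinearMap.lTensor_comp]
    rfl
  · -- not ≥
    intro hge
    obtain ⟨x, hxN', hxN⟩ := SetLike.exists_of_lt (lt_of_le_of_ne hle hne)
    have hmem : ((1 : S) ⊗ₜ[R] x : S ⊗[R] M) ∈
        LinearMap.range (LinearMap.lTensor S N'.subtype) :=
      ⟨(1 : S) ⊗ₜ[R] (⟨x, hxN'⟩ : N'), rfl⟩
    obtain ⟨z, hz⟩ := hge hmem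
    have key : LinearMap.lTensor S N.mkQ ((1 : S) ⊗ₜ[R] x) = 0 := by
      rw [← hz, ← LinearMap.comp_apply, ← LinearMap.lTensor_comp]
      have : N.mkQ.comp N.subtype = 0 := by
        ext n; simp [Submodule.Quotient.mk_eq_zero, n.2]
      rw [this, LinearMap.lTensor_zero, LinearMap.zero_apply]
    have : (1 : S) ⊗ₜ[R] (N.mkQ x) = ((1 : S) ⊗ₜ[R] (0 : M ⧸ N) : S ⊗[R] (M ⧸ N)) := by
      simpa using key
    have := hpure (M ⧸ N) this
    exact hxN (by simpa [Submodule.Quotient.mk_eq_zero] using this)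
end

section
/- Let (R, m) be a Noetherian local ring of prime characteristic p with m-adic completion R̂. If every ideal of R is contracted with respect to Frobenius in the sense that for all ideals J ⊆ R and v ∈ R, v^p ∈ J^{[p]} implies v ∈ J, then every ideal of R̂ has the same property: for every ideal I of R̂ and u ∈ R̂, u^p ∈ I^{[p]} implies u ∈ I. -/
/-!
Fix `s` and let `J ⊆ R` be the contraction of `I + ker (R̂ → R ⧸ 𝔪 ^ s)`. Since `𝔪 ^ s ≤ J`,
the ideal `J^[p]` contains `𝔪 ^ N` for some `N ≥ s`; reducing `u ^ p ∈ I^[p]` modulo `𝔪 ^ N`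
shows `v ^ p ∈ J^[p]` for a lift `v ∈ R` of `u` modulo `𝔪 ^ N`, so `v ∈ J`, that is,
`u ∈ I + ker (R̂ → R ⧸ 𝔪 ^ s)`. Replacing `I` by a finitely generated `I' ≤ I` with
`u ^ p ∈ I'^[p]`, it remains to see that finitely generated ideals of `R̂` are closed. For
`(b₁, …, bᵣ)`, the coefficient vectors expressing `u` modulo `𝔪 ^ n` form nonempty cosets in the
Artinian modules `(R ⧸ 𝔪 ^ n)ʳ`, mapped into each other by reduction; the Mittag-Leffler argument
picks a compatible family of them, that is, a coefficient vector in `R̂ʳ`.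
-/

open IsLocalRing

theorem Ideal.exists_fg_le_and_mem_span_image {S T : Type*} [CommSemiring S] [CommSemiring T]
    {f : S → T} {I : Ideal S} {x : T} (hx : x ∈ Ideal.span (f '' I)) :
    ∃ I' ≤ I, I'.FG ∧ x ∈ Ideal.span (f '' I') := by
  classical
  obtain ⟨t, ht, hxt⟩ := Submodule.mem_span_finite_of_mem_span hx
  obtain ⟨t', ht'I, rfl⟩ := Finset.subset_set_image_iff.mp ht
  refine ⟨Ideal.span t', Ideal.span_le.mpr ht'I, ⟨t', rfl⟩, Ideal.span_mono ?_ hxt⟩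
  rw [Finset.coe_image]
  exact Set.image_mono Ideal.subset_span

theorem Ideal.eventually_pow_le_span_pow_image {R : Type*} [CommRing R] {𝔞 J : Ideal R}
    (h𝔞 : 𝔞.FG) {s : ℕ} (hJ : 𝔞 ^ s ≤ J) (p : ℕ) :
    ∀ᶠ N in Filter.atTop, 𝔞 ^ N ≤ Ideal.span ((· ^ p) '' (J : Set R)) := by
  obtain ⟨N, hN⟩ : ∃ N, 𝔞 ^ N ≤ Ideal.span ((· ^ p) '' (J : Set R)) :=
    Ideal.exists_pow_le_of_le_radical_of_fg (fun x hx ↦ ⟨s * p, by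
    rw [pow_mul]; exact Ideal.subset_span ⟨x ^ s, hJ (Ideal.pow_mem_pow hx s), rfl⟩⟩) h𝔞
  exact Filter.eventually_atTop.mpr ⟨N, fun M hM ↦ (Ideal.pow_le_pow_right hM).trans hN⟩

theorem IsLocalRing.isArtinianRing_quotient_maximalIdeal_pow {R : Type*} [CommRing R]
    [IsNoetherianRing R] [IsLocalRing R] (n : ℕ) :
    IsArtinianRing (R ⧸ maximalIdeal R ^ n) := by
  rcases n.eq_zero_or_pos with rfl | hn
  · rw [pow_zero, Ideal.one_eq_top]; infer_instance
  · apply IsLocalRing.quotient_artinian_of_mem_minimalPrimes_of_isLocalRing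
    rw [← Ideal.radical_minimalPrimes, Ideal.radical_pow _ hn.ne',
      (maximalIdeal.isMaximal R).isPrime.radical, Ideal.minimalPrimes_eq_subsingleton_self]
    rfl

theorem IsArtinian.affineSubspace_antitone_stabilizes {R M : Type*} [Ring R] [AddCommGroup M]
    [Module R M] [IsArtinian R M] {s : ℕ → AffineSubspace R M} (hs : Antitone s)
    (hne : ∀ k, (s k : Set M).Nonempty) : ∃ n, ∀ m, n ≤ m → s n = s m := by
  obtain ⟨n, hn⟩ := IsArtinian.monotone_stabilizes
    ⟨fun k ↦ OrderDual.toDual (s k).direction, fun _ _ h ↦ AffineSubspace.direction_le (hs h)⟩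
  refine ⟨n, fun m hm ↦ AffineSubspace.ext_of_direction_eq (hn m hm) ?_⟩
  obtain ⟨x, hx⟩ := hne m
  exact ⟨x, hs hm hx, hx⟩

section MittagLeffler

variable {R : Type*} [Ring R] {W : ℕ → Type*} [∀ n, AddCommGroup (W n)] [∀ n, Module R (W n)]
  (π : ∀ n, W (n + 1) →ₗ[R] W n) (A : ∀ n, AffineSubspace R (W n))

def affineImage : (k n : ℕ) → AffineSubspace R (W n)
  | 0, n => A n
  | k + 1, n => (affineImage k (n + 1)).map (π n).toAffineMap

variable {π A}

theorem affineImage_succ_le (hA : ∀ n, Set.MapsTo (π n) (A (n + 1)) (A n)) (k n : ℕ) :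
    affineImage π A (k + 1) n ≤ affineImage π A k n := by
  induction k generalizing n with
  | zero => exact Set.image_subset_iff.mpr (hA n)
  | succ k ih => exact AffineSubspace.map_mono _ (ih (n + 1))

theorem affineImage_nonempty (hne : ∀ n, (A n : Set (W n)).Nonempty) (k n : ℕ) :
    (affineImage π A k n : Set (W n)).Nonempty := by
  induction k generalizing n with
  | zero => exact hne n
  | succ k ih => exact (ih (n + 1)).image _

theorem exists_compatible_seq_of_isArtinian [∀ n, IsArtinian R (W n)]
    (hne : ∀ n, (A n : Set (W n)).Nonempty) (hA : ∀ n, Set.MapsTo (π n) (A (n + 1)) (A n)) :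
    ∃ a : ∀ n, W n, ∀ n, a n ∈ A n ∧ π n (a (n + 1)) = a n := by
  have anti n : Antitone (affineImage π A · n) :=
    antitone_nat_of_succ_le fun k ↦ affineImage_succ_le hA k n
  choose k₀ hk₀ using fun n ↦
    IsArtinian.affineSubspace_antitone_stabilizes (anti n) (affineImage_nonempty hne · n)
  set E : ∀ n, AffineSubspace R (W n) := fun n ↦ affineImage π A (k₀ n) n
  -- Mittag-Leffler: the stable images `E n` form an inverse system with surjective maps.
  have hE n : E n = (E (n + 1)).map (π n).toAffineMap := by
    have h₁ := hk₀ n (max (k₀ n) (k₀ (n + 1)) + 1) (by omega)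
    have h₂ := hk₀ (n + 1) (max (k₀ n) (k₀ (n + 1))) (le_max_right _ _)
    simp only [E, h₁, affineImage, h₂]
  have exists_lift n (x : W n) (hx : x ∈ E n) : ∃ y ∈ E (n + 1), π n y = x := by
    rwa [hE n] at hx
  choose next next_mem π_next using exists_lift
  obtain ⟨x₀, hx₀⟩ := affineImage_nonempty hne (k₀ 0) 0
  let a : ∀ n, {x : W n // x ∈ E n} := fun n ↦ Nat.rec (motive := fun n ↦ {x : W n // x ∈ E n})
    ⟨x₀, hx₀⟩ (fun n x ↦ ⟨next n x.1 x.2, next_mem n x.1 x.2⟩) n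
  exact ⟨fun n ↦ (a n).1, fun n ↦ ⟨anti n (Nat.zero_le _) (a n).2, π_next n _ (a n).2⟩⟩

end MittagLeffler

namespace AdicCompletion

variable {R : Type*} [CommRing R]

section

variable (I : Ideal R)

theorem factor_evalₐ {m n : ℕ} (h : m ≤ n) (x : AdicCompletion I R) :
    Ideal.Quotient.factor (Ideal.pow_le_pow_right h) (evalₐ I n x) = evalₐ I m x := by
  obtain ⟨a, rfl⟩ := mk_surjective I R x
  rw [evalₐ_mk, evalₐ_mk, Ideal.Quotient.factor_mk, Ideal.Quotient.mk_eq_mk_iff_sub_mem]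
  simpa [SModEq.sub_mem] using (a.property h).symm

theorem exists_evalₐ_eq (f : ∀ n, R ⧸ I ^ n)
    (hf : ∀ n, Ideal.Quotient.factor (Ideal.pow_le_pow_right n.le_succ) (f (n + 1)) = f n) :
    ∃ x, ∀ n, evalₐ I n x = f n := by
  choose a ha using fun n ↦ Ideal.Quotient.mk_surjective (f n)
  have cauchy n : a n ≡ a (n + 1) [SMOD (I ^ n • ⊤ : Submodule R R)] := by
    rw [SModEq.sub_mem, smul_eq_mul, Ideal.mul_top, ← Ideal.Quotient.mk_eq_mk_iff_sub_mem, ha,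
      ← Ideal.Quotient.factor_mk (Ideal.pow_le_pow_right n.le_succ), ha, hf]
  exact ⟨mk I R (AdicCauchySequence.mk I R a cauchy), fun n ↦ by simp [ha]⟩

end

local notation "𝔪" => maximalIdeal R

theorem mem_of_forall_evalₐ_mem_map [IsNoetherianRing R] [IsLocalRing R]
    {J : Ideal (AdicCompletion 𝔪 R)} (hJ : J.FG) {u : AdicCompletion 𝔪 R}
    (h : ∀ n, evalₐ 𝔪 n u ∈ J.map (evalₐ 𝔪 n)) : u ∈ J := by
  obtain ⟨r, b, rfl⟩ := Submodule.fg_iff_exists_fin_generating_family.mp hJ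
  have (n : ℕ) : IsArtinian R (R ⧸ 𝔪 ^ n) :=
    have := IsLocalRing.isArtinianRing_quotient_maximalIdeal_pow (R := R) n
    isArtinian_of_surjective_algebraMap (Ideal.Quotient.mk_surjective (I := 𝔪 ^ n))
  let θ (n : ℕ) : (Fin r → R ⧸ 𝔪 ^ n) →ₗ[R] R ⧸ 𝔪 ^ n :=
    (Fintype.linearCombination (R ⧸ 𝔪 ^ n) fun i ↦ evalₐ 𝔪 n (b i)).restrictScalars R
  have θ_apply n c : θ n c = ∑ i, c i * evalₐ 𝔪 n (b i) := Fintype.linearCombination_apply ..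
  let π (n : ℕ) : (Fin r → R ⧸ 𝔪 ^ (n + 1)) →ₗ[R] Fin r → R ⧸ 𝔪 ^ n :=
    (Ideal.Quotient.factorₐ R (Ideal.pow_le_pow_right n.le_succ)).toLinearMap.compLeft (Fin r)
  have θ_π n c :
      θ n (π n c) = Ideal.Quotient.factor (Ideal.pow_le_pow_right n.le_succ) (θ (n + 1) c) := by
    simp [θ_apply, π, map_sum, factor_evalₐ]
  have hu n : ∃ c, θ n c = evalₐ 𝔪 n u := by
    have := h n
    rw [Ideal.map_span, ← Set.range_comp, Ideal.mem_span_range_iff_exists_fun] at this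
    simpa [θ_apply] using this
  choose c₀ hc₀ using hu
  let A (n : ℕ) : AffineSubspace R (Fin r → R ⧸ 𝔪 ^ n) := .mk' (c₀ n) (LinearMap.ker (θ n))
  have mem_A n c : c ∈ A n ↔ θ n c = evalₐ 𝔪 n u := by
    simp [A, AffineSubspace.mem_mk', sub_eq_zero, hc₀]
  obtain ⟨a, ha⟩ := exists_compatible_seq_of_isArtinian (π := π) (A := A)
    (fun n ↦ ⟨c₀ n, AffineSubspace.self_mem_mk' _ _⟩)
    (fun n c hc ↦ by
      rw [SetLike.mem_coe, mem_A] at hc ⊢; rw [θ_π, hc, factor_evalₐ _ n.le_succ])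
  -- A compatible family of coefficient vectors of `u` at all levels converges in the completion.
  choose x hx using fun i ↦ exists_evalₐ_eq 𝔪 (a · i) fun n ↦ congrFun (ha n).2 i
  refine Ideal.mem_span_range_iff_exists_fun.mpr ⟨x, ext_evalₐ fun n ↦ ?_⟩
  rw [← (mem_A n (a n)).mp (ha n).1, θ_apply]
  simp [hx]

theorem evalₐ_mem_map_of_pow_mem_span_pow [IsNoetherianRing R] [IsLocalRing R] {p : ℕ}
    (h : ∀ (J : Ideal R) (v : R), v ^ p ∈ Ideal.span ((· ^ p) '' (J : Set R)) → v ∈ J)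
    {I : Ideal (AdicCompletion 𝔪 R)} {u : AdicCompletion 𝔪 R}
    (hu : u ^ p ∈ Ideal.span ((· ^ p) '' (I : Set (AdicCompletion 𝔪 R)))) (s : ℕ) :
    evalₐ 𝔪 s u ∈ I.map (evalₐ 𝔪 s) := by
  set J := (I.map (evalₐ 𝔪 s)).comap (Ideal.Quotient.mk (𝔪 ^ s))
  have lift_mem {n : ℕ} (hsn : s ≤ n) {x β} (hx : x ∈ I)
      (hβ : Ideal.Quotient.mk (𝔪 ^ n) β = evalₐ 𝔪 n x) : β ∈ J := by
    rw [Ideal.mem_comap, ← Ideal.Quotient.factor_mk (Ideal.pow_le_pow_right hsn), hβ,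
      factor_evalₐ _ hsn]
    exact Ideal.mem_map_of_mem _ hx
  have hsJ : 𝔪 ^ s ≤ J := fun x hx ↦ by
    simp [J, Ideal.Quotient.eq_zero_iff_mem.mpr hx]
  obtain ⟨N, hN, hsN⟩ := ((Ideal.eventually_pow_le_span_pow_image
    (IsNoetherian.noetherian 𝔪) hsJ p).and (Filter.eventually_ge_atTop s)).exists
  obtain ⟨v, hv⟩ := Ideal.Quotient.mk_surjective (evalₐ 𝔪 N u)
  have hvp : v ^ p ∈ Ideal.span ((· ^ p) '' (J : Set R)) := by
    rw [← Ideal.mem_quotient_iff_mem hN, map_pow, hv, ← map_pow, Ideal.map_span]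
    refine Ideal.span_le.mpr ?_ (Ideal.map_span (evalₐ 𝔪 N) _ ▸ Ideal.mem_map_of_mem _ hu)
    rintro _ ⟨_, ⟨x, hx, rfl⟩, rfl⟩
    obtain ⟨β, hβ⟩ := Ideal.Quotient.mk_surjective (evalₐ 𝔪 N x)
    rw [map_pow, ← hβ, ← map_pow]
    exact Ideal.subset_span ⟨β ^ p, ⟨β, lift_mem hsN hx hβ, rfl⟩, rfl⟩
  rw [← factor_evalₐ _ hsN, ← hv, Ideal.Quotient.factor_mk]
  exact h J v hvp

end AdicCompletion

theorem stmt4_general (R : Type) [CommRing R] [IsNoetherianRing R] [IsLocalRing R]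
    (p : ℕ)
    (h : ∀ (J : Ideal R) (v : R),
        v ^ p ∈ Ideal.span ((fun a => a ^ p) '' (J : Set R)) → v ∈ J) :
    ∀ (I : Ideal (AdicCompletion (IsLocalRing.maximalIdeal R) R))
      (u : AdicCompletion (IsLocalRing.maximalIdeal R) R),
        u ^ p ∈ Ideal.span ((fun a => a ^ p) '' (I : Set _)) → u ∈ I := by
  intro I u hu
  obtain ⟨I', hI'I, hI', hu'⟩ := Ideal.exists_fg_le_and_mem_span_image hu
  exact hI'I (AdicCompletion.mem_of_forall_evalₐ_mem_map hI'
    (AdicCompletion.evalₐ_mem_map_of_pow_mem_span_pow h hu'))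

/-- If in a Noetherian local ring `R` of prime characteristic `p` every ideal is contracted
with respect to Frobenius (`v ^ p ∈ J^{[p]}` implies `v ∈ J`), then the same holds for every
ideal of the `m`-adic completion of `R`. -/
theorem stmt4 (R : Type) [CommRing R] [IsNoetherianRing R] [IsLocalRing R]
    (p : ℕ) (hp : p.Prime) [CharP R p]
    (h : ∀ (J : Ideal R) (v : R),
        v ^ p ∈ Ideal.span ((fun a => a ^ p) '' (J : Set R)) → v ∈ J) :
    ∀ (I : Ideal (AdicCompletion (IsLocalRing.maximalIdeal R) R))
      (u : AdicCompletion (IsLocalRing.maximalIdeal R) R),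
        u ^ p ∈ Ideal.span ((fun a => a ^ p) '' (I : Set _)) → u ∈ I :=
  stmt4_general R p h
end

section
/- Let R be a commutative ring of prime characteristic p and let W be an R{F}-module. The following conditions are equivalent: (a) for every F-stable submodule V of W, F acts injectively on W/V; (b) F acts injectively on every subquotient V'/V of W (V ⊆ V' F-stable submodules); (c) the action of F on any nonzero subquotient of W is not nilpotent; (d) the action of F on any nonzero subquotient of W is nonzero; (e) whenever V ⊆ V' are F-stable submodules of W with F^k(V') ⊆ V for some k ≥ 1, then V' = V. -/
private lemma span_F_mem {R W : Type} [CommRing R] [AddCommGroup W] [Module R W]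
    (p : ℕ) (F : W →+ W) (hF : ∀ (r : R) (u : W), F (r • u) = r ^ p • F u)
    (S : Set W) (U : Submodule R W) (h : ∀ s ∈ S, F s ∈ U) :
    ∀ y ∈ Submodule.span R S, F y ∈ U := by
  intro y hy
  induction hy using Submodule.span_induction with
  | mem x hx => exact h x hx
  | zero => simp
  | add a b _ _ ha hb => rw [map_add]; exact U.add_mem ha hb
  | smul r a _ ha => rw [hF]; exact U.smul_mem _ ha

/-- Equivalent characterizations of anti-nilpotency for an `R{F}`-module `W` over a
commutative ring `R` of prime characteristic `p`.  Conditions on subquotients `V'/V` by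
`F`-stable submodules `V ≤ V'` are expressed elementwise. -/
theorem stmt10 (R : Type) [CommRing R] (p : ℕ) (hp : p.Prime) [CharP R p]
    (W : Type) [AddCommGroup W] [Module R W] (F : W →+ W)
    (hF : ∀ (r : R) (u : W), F (r • u) = r ^ p • F u) :
    List.TFAE [
      -- (a) `F` acts injectively on `W/V` for every `F`-stable `V`
      (∀ V : Submodule R W, (∀ v ∈ V, F v ∈ V) → ∀ x : W, F x ∈ V → x ∈ V),
      -- (b) `F` acts injectively on every subquotient `V'/V`
      (∀ V V' : Submodule R W, (∀ v ∈ V, F v ∈ V) → (∀ v ∈ V', F v ∈ V') → V ≤ V' →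
        ∀ x ∈ V', F x ∈ V → x ∈ V),
      -- (c) `F` is not nilpotent on any nonzero subquotient
      (∀ V V' : Submodule R W, (∀ v ∈ V, F v ∈ V) → (∀ v ∈ V', F v ∈ V') → V ≤ V' →
        V ≠ V' → ¬ ∃ k : ℕ, 1 ≤ k ∧ ∀ x ∈ V', F^[k] x ∈ V),
      -- (d) `F` is nonzero on any nonzero subquotient
      (∀ V V' : Submodule R W, (∀ v ∈ V, F v ∈ V) → (∀ v ∈ V', F v ∈ V') → V ≤ V' →
        V ≠ V' → ¬ ∀ x ∈ V', F x ∈ V),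
      -- (e) if `F^k (V') ⊆ V` for some `k ≥ 1` then `V' = V`
      (∀ V V' : Submodule R W, (∀ v ∈ V, F v ∈ V) → (∀ v ∈ V', F v ∈ V') → V ≤ V' →
        (∃ k : ℕ, 1 ≤ k ∧ ∀ x ∈ V', F^[k] x ∈ V) → V' = V)] := by
  tfae_have 1 → 2 := by
    intro h V V' hV hV' hle x hx hFx
    exact h V hV x hFx
  tfae_have 2 → 1 := by
    intro h V hV x hFx
    exact h V ⊤ hV (fun v _ => trivial) le_top x trivial hFx
  tfae_have 2 → 3 := by
    intro h V V' hV hV' hle hne ⟨k, hk, hall⟩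
    have hstab : ∀ n : ℕ, ∀ x ∈ V', F^[n] x ∈ V' := by
      intro n
      induction n with
      | zero => intro x hx; simpa using hx
      | succ n ih =>
        intro x hx
        rw [Function.iterate_succ_apply']
        exact hV' _ (ih x hx)
    have key : ∀ n : ℕ, (∀ x ∈ V', F^[n] x ∈ V) → ∀ x ∈ V', x ∈ V := by
      intro n
      induction n with
      | zero => intro h' x hx; simpa using h' x hx
      | succ n ih =>
        intro h' x hx
        refine ih (fun y hy => ?_) x hx
        apply h V V' hV hV' hle (F^[n] y) (hstab n y hy)
        have := h' y hy
        rwa [Function.iterate_succ_apply'] at this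
    exact hne (le_antisymm hle (key k hall))
  tfae_have 3 → 4 := by
    intro h V V' hV hV' hle hne hall
    exact h V V' hV hV' hle hne ⟨1, le_refl 1, fun x hx => by simpa using hall x hx⟩
  tfae_have 4 → 1 := by
    intro h V hV x hFx
    by_contra hx
    set V'' : Submodule R W := Submodule.span R (insert x (V : Set W)) with hV''
    have hgen : ∀ s ∈ insert x (V : Set W), F s ∈ V := by
      rintro s (rfl | hs)
      · exact hFx
      · exact hV s hs
    have hFV'' : ∀ y ∈ V'', F y ∈ V := span_F_mem p F hF _ V hgen
    have hleV : V ≤ V'' := fun v hv =>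
      Submodule.subset_span (Set.mem_insert_of_mem _ hv)
    have hxV'' : x ∈ V'' := Submodule.subset_span (Set.mem_insert _ _)
    have hne : V ≠ V'' := fun heq => hx (heq ▸ hxV'')
    exact h V V'' hV (fun v hv => hleV (hFV'' v hv)) hleV hne hFV''
  tfae_have 3 → 5 := by
    intro h V V' hV hV' hle hk
    by_contra hne
    exact h V V' hV hV' hle (fun heq => hne heq.symm) hk
  tfae_have 5 → 3 := by
    intro h V V' hV hV' hle hne hk
    exact hne (h V V' hV hV' hle hk).symm
  tfae_finish
end

section
/- Let (R, m) be a Noetherian local ring with residue field K and let M be an Artinian R-module. Let M⟨x^{-1}⟩ = M ⊗_ℤ (ℤ[x, x^{-1}]/ℤ[x]), viewed as a module over the power series ring R[[x]] (every element is killed by a power of x). Then M⟨x^{-1}⟩ is an Artinian R[[x]]-module. -/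
/-!
Filter a submodule `P ⊆ M⟨x⁻¹⟩` by the order of the pole: the coefficients of `x^{-(k+1)}` of
the elements of `P` without deeper poles form an `R`-submodule `Lₖ(P)` of `M`. Multiplication by
`x` makes `k ↦ Lₖ(P)` antitone, and these leading-coefficient modules determine `P` inside any
larger submodule, as for leading coefficients of polynomial ideals. A descending chain of
submodules `Pᵢ` thus gives a family `Lₖ(Pᵢ)` antitone in both indices in the Artinian lattice of
submodules of `M`, and such a family stabilises uniformly in `k`.
-/

theorem WellFoundedLT.antitone_chain_condition_of_forall_antitone {α : Type*} [PartialOrder α]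
    [WellFoundedLT α] {f : ℕ → ℕ → α} (hf : Antitone f) (hf' : ∀ i, Antitone (f i)) :
    ∃ n, ∀ m, n ≤ m → f n = f m := by
  choose s hs using fun k => antitone_chain_condition (f := fun i => f i k) fun _ _ h => hf h k
  -- `g k` is the eventual value of `f i k` as `i → ∞`.
  set g : ℕ → α := fun k => f (s k) k
  have eq_g : ∀ k i, s k ≤ i → f i k = g k := fun k i h => (hs k i h).symm
  have g_le : ∀ i k, g k ≤ f i k := fun i k =>
    (le_total i (s k)).elim (fun h => hf h k) fun h => (eq_g k i h).ge
  have g_anti : Antitone g := fun k k' hk => by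
    calc g k' = f (max (s k) (s k')) k' := (eq_g k' _ (le_max_right _ _)).symm
      _ ≤ f (max (s k) (s k')) k := hf' _ hk
      _ = g k := eq_g k _ (le_max_left _ _)
  obtain ⟨K, hK⟩ := antitone_chain_condition g_anti
  set n := (Finset.range (K + 1)).sup s
  have eq_g_of_ge : ∀ m, n ≤ m → f m = g := fun m hm => funext fun k => by
    rcases le_or_gt k K with hk | hk
    · exact eq_g k m (le_trans (Finset.le_sup (Finset.mem_range.2 (Nat.lt_succ_of_le hk))) hm)
    · -- beyond `K`, both `f m` and `g` are squeezed at the common value `g K`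
      refine le_antisymm ?_ (g_le m k)
      calc f m k ≤ f m K := hf' m hk.le
        _ = g K := eq_g K m (le_trans (Finset.le_sup (Finset.mem_range.2 K.lt_succ_self)) hm)
        _ = g k := hK k hk.le
  exact ⟨n, fun m hm => (eq_g_of_ge n le_rfl).trans (eq_g_of_ge m hm).symm⟩

section LeadingCoeff

variable {R M N : Type*} [Ring R] [AddCommGroup M] [Module R M] [AddCommGroup N]
  [Module (PowerSeries R) N] (e : N ≃+ (ℕ →₀ M))
  (hC : ∀ (r : R) (w : N), e (PowerSeries.C r • w) = r • e w)

def leadingCoeffNth (P : Submodule (PowerSeries R) N) (k : ℕ) : Submodule R M where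
  carrier := {a | ∃ w ∈ P, (∀ j, k < j → e w j = 0) ∧ e w k = a}
  zero_mem' := ⟨0, P.zero_mem, fun _ _ => by simp, by simp⟩
  add_mem' := by
    rintro _ _ ⟨w, hw, hw0, rfl⟩ ⟨v, hv, hv0, rfl⟩
    exact ⟨w + v, P.add_mem hw hv, fun j h => by simp [hw0 j h, hv0 j h], by simp⟩
  smul_mem' := by
    rintro r _ ⟨w, hw, hw0, rfl⟩
    exact ⟨PowerSeries.C r • w, P.smul_mem _ hw, fun j h => by simp [hC, hw0 j h], by simp [hC]⟩

theorem leadingCoeffNth_succ_le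
    (hX : ∀ (w : N) (n : ℕ), e ((PowerSeries.X : PowerSeries R) • w) n = e w (n + 1))
    (P : Submodule (PowerSeries R) N) (k : ℕ) :
    leadingCoeffNth e hC P (k + 1) ≤ leadingCoeffNth e hC P k := by
  rintro _ ⟨w, hw, hw0, rfl⟩
  exact ⟨PowerSeries.X • w, P.smul_mem _ hw,
    fun j h => (hX w j).trans (hw0 (j + 1) (Nat.succ_lt_succ h)), hX w k⟩

theorem leadingCoeffNth_mono {P Q : Submodule (PowerSeries R) N} (hQP : Q ≤ P) (k : ℕ) :
    leadingCoeffNth e hC Q k ≤ leadingCoeffNth e hC P k := by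
  rintro _ ⟨w, hw, hw0, rfl⟩
  exact ⟨w, hQP hw, hw0, rfl⟩

theorem le_of_leadingCoeffNth_le {P Q : Submodule (PowerSeries R) N} (hQP : Q ≤ P)
    (h : ∀ k, leadingCoeffNth e hC P k ≤ leadingCoeffNth e hC Q k) : P ≤ Q := by
  -- Induction on a bound `B` for the support, cancelling the top coefficient by an element of `Q`.
  have mem_of_bound : ∀ B, ∀ w ∈ P, (∀ k, B ≤ k → e w k = 0) → w ∈ Q := by
    intro B
    induction B with
    | zero =>
      intro w _ hw0
      obtain rfl : w = 0 := e.injective <| by ext k; simpa using hw0 k k.zero_le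
      exact Q.zero_mem
    | succ B ih =>
      intro w hw hw0
      obtain ⟨v, hv, hv0, hvB⟩ := h B ⟨w, hw, fun j hj => hw0 j hj, rfl⟩
      have hwv : w - v ∈ Q := by
        refine ih (w - v) (P.sub_mem hw (hQP hv)) fun k hk => ?_
        rcases hk.eq_or_lt with rfl | hlt
        · simp [hvB]
        · simp [hw0 k hlt, hv0 k hlt]
      simpa using Q.add_mem hwv hv
  intro w hw
  obtain ⟨B, hB⟩ := (e w).support.exists_nat_subset_range
  exact mem_of_bound B w hw fun k hk =>
    Finsupp.notMem_support_iff.1 fun hks => (Finset.mem_range.1 (hB hks)).not_ge hk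

end LeadingCoeff

theorem stmt13_general (R : Type) [CommRing R]
    (M : Type) [AddCommGroup M] [Module R M] [IsArtinian R M]
    (N : Type) [AddCommGroup N] [Module (PowerSeries R) N]
    (e : N ≃+ (ℕ →₀ M))
    (hC : ∀ (r : R) (w : N), e ((PowerSeries.C (R := R) r) • w) = r • e w)
    (hX : ∀ (w : N) (n : ℕ), e ((PowerSeries.X : PowerSeries R) • w) n = e w (n + 1)) :
    IsArtinian (PowerSeries R) N := by
  rw [← monotone_stabilizes_iff_artinian]
  intro P
  have hP : ∀ {i j}, i ≤ j → (P j).ofDual ≤ (P i).ofDual := fun h => P.monotone h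
  obtain ⟨n, hn⟩ := WellFoundedLT.antitone_chain_condition_of_forall_antitone
    (f := fun i => leadingCoeffNth e hC (P i).ofDual)
    (fun _ _ h k => leadingCoeffNth_mono e hC (hP h) k)
    (fun i => antitone_nat_of_succ_le (leadingCoeffNth_succ_le e hC hX _))
  exact ⟨n, fun m hm => le_antisymm (hP hm)
    (le_of_leadingCoeffNth_le e hC (hP hm) fun k => (congrFun (hn m hm) k).le)⟩

/-- Let `(R, m)` be a Noetherian local ring and `M` an Artinian `R`-module.  Let `N` be an
`R[[x]]`-module which, as in the construction `M⟨x⁻¹⟩ = ⊕_{n ≥ 1} M x⁻ⁿ`, is additively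
isomorphic to `ℕ →₀ M` (the index `n` recording the coefficient of `x^{-(n+1)}`), with `R`
acting coordinatewise and `x` acting as the shift.  Then `N` is an Artinian
`R[[x]]`-module. -/
theorem stmt13 (R : Type) [CommRing R] [IsNoetherianRing R] [IsLocalRing R]
    (M : Type) [AddCommGroup M] [Module R M] [IsArtinian R M]
    (N : Type) [AddCommGroup N] [Module (PowerSeries R) N]
    (e : N ≃+ (ℕ →₀ M))
    (hC : ∀ (r : R) (w : N), e ((PowerSeries.C (R := R) r) • w) = r • e w)
    (hX : ∀ (w : N) (n : ℕ), e ((PowerSeries.X : PowerSeries R) • w) n = e w (n + 1)) :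
    IsArtinian (PowerSeries R) N :=
  stmt13_general R M N e hC hX
end

section
/- Let (R, m) be a local ring of prime characteristic p and let M be a simple R{F}-module on which F acts injectively. Equip N = M⟨x^{-1}⟩ = ⊕_{n≥1} M x^{-n} with its R[[x]]{F}-module structure where F(u x^{-n}) = F(u) x^{-pn}. Then N is a simple R[[x]]{F}-module. -/
/-!
For a nonzero `G`-stable `R[[x]]`-submodule `V` of `N`, look at the `R`-submodules
`Vₙ = {u | u x^{-(n+1)} ∈ V}` of `M`. Multiplication by powers of `x` shows that the `Vₙ`
decrease with `n` and that `V₀ ≠ 0` (push the top-degree term of a nonzero element down to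
degree `0`). Since `G` sends degree `n` to degree `pn + p - 1 ≥ n`, each `Vₙ` is `F`-stable,
and as `F` is injective and `pn + p - 1 > n`, induction gives `Vₙ ≠ 0` for all `n`.
Simplicity of `M` then forces `Vₙ = M` for every `n`, i.e. `V = N`.
-/

namespace InverseSeries

open PowerSeries

variable {R M N : Type*} [CommRing R] [AddCommGroup M] [AddCommGroup N]
  [Module R⟦X⟧ N] (e : N ≃+ (ℕ →₀ M))

theorem apply_X_pow_smul (hX : ∀ (w : N) (n : ℕ), e ((X : R⟦X⟧) • w) n = e w (n + 1))
    (k : ℕ) (w : N) (n : ℕ) : e ((X ^ k : R⟦X⟧) • w) n = e w (n + k) := by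
  induction k generalizing w with
  | zero => simp
  | succ k ih => rw [pow_succ, mul_smul, ih, hX, add_assoc]

theorem X_pow_smul_symm_single
    (hX : ∀ (w : N) (n : ℕ), e ((X : R⟦X⟧) • w) n = e w (n + 1))
    (n k : ℕ) (u : M) :
    (X ^ k : R⟦X⟧) • e.symm (Finsupp.single (n + k) u) = e.symm (Finsupp.single n u) := by
  apply e.injective
  ext m
  simp [apply_X_pow_smul e hX, Finsupp.single_apply]

theorem apply_X_pow_smul_of_support_le
    (hX : ∀ (w : N) (n : ℕ), e ((X : R⟦X⟧) • w) n = e w (n + 1))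
    {w : N} {n : ℕ} (hw : ∀ m ∈ (e w).support, m ≤ n) :
    e ((X ^ n : R⟦X⟧) • w) = Finsupp.single 0 (e w n) := by
  ext m
  rw [apply_X_pow_smul e hX]
  rcases Nat.eq_zero_or_pos m with rfl | hm
  · simp
  · have hvanish : e w (m + n) = 0 :=
      Finsupp.notMem_support_iff.mp fun hmem => by have := hw _ hmem; omega
    rw [hvanish, Finsupp.single_apply, if_neg (by omega)]

variable [Module R M]

def coeffSubmodule (hC : ∀ (r : R) (w : N), e (C r • w) = r • e w)
    (V : Submodule R⟦X⟧ N) (n : ℕ) : Submodule R M where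
  carrier := {u | e.symm (Finsupp.single n u) ∈ V}
  add_mem' {a b} ha hb := by
    simpa only [Set.mem_ofPred_eq, Finsupp.single_add, map_add] using V.add_mem ha hb
  zero_mem' := by simp
  smul_mem' r u hu := by
    have hsmul : C r • e.symm (Finsupp.single n u) = e.symm (Finsupp.single n (r • u)) :=
      e.injective (by simp [hC, Finsupp.smul_single])
    simpa only [Set.mem_ofPred_eq, ← hsmul] using V.smul_mem (C r) hu

variable (hC : ∀ (r : R) (w : N), e (C r • w) = r • e w) (V : Submodule R⟦X⟧ N)

theorem mem_coeffSubmodule {n : ℕ} {u : M} :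
    u ∈ coeffSubmodule e hC V n ↔ e.symm (Finsupp.single n u) ∈ V := Iff.rfl

theorem coeffSubmodule_antitone
    (hX : ∀ (w : N) (n : ℕ), e ((X : R⟦X⟧) • w) n = e w (n + 1)) :
    Antitone (coeffSubmodule e hC V) := by
  intro m n hmn u hu
  obtain ⟨k, rfl⟩ := Nat.exists_eq_add_of_le hmn
  rw [mem_coeffSubmodule, ← X_pow_smul_symm_single e hX]
  exact V.smul_mem _ hu

theorem coeffSubmodule_zero_ne_bot
    (hX : ∀ (w : N) (n : ℕ), e ((X : R⟦X⟧) • w) n = e w (n + 1)) (hV : V ≠ ⊥) :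
    coeffSubmodule e hC V 0 ≠ ⊥ := by
  obtain ⟨w, hwV, hw⟩ := (Submodule.ne_bot_iff V).mp hV
  have hsupp : (e w).support.Nonempty :=
    Finsupp.support_nonempty_iff.mpr (by simpa using hw)
  set top := (e w).support.max' hsupp
  have hlead : e.symm (Finsupp.single 0 (e w top)) = (X ^ top : R⟦X⟧) • w := by
    rw [AddEquiv.symm_apply_eq,
      apply_X_pow_smul_of_support_le e hX fun m hm => (e w).support.le_max' m hm]
  refine (Submodule.ne_bot_iff _).mpr ⟨e w top, ?_, ?_⟩
  · rw [mem_coeffSubmodule, hlead]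
    exact V.smul_mem _ hwV
  · exact Finsupp.mem_support_iff.mp ((e w).support.max'_mem hsupp)

theorem eq_top_of_forall_coeffSubmodule_eq_top (h : ∀ n, coeffSubmodule e hC V n = ⊤) :
    V = ⊤ := by
  have hall : ∀ f : ℕ →₀ M, e.symm f ∈ V := by
    intro f
    induction f using Finsupp.induction with
    | zero => simp
    | single_add n u f _ _ ih =>
      rw [map_add]
      exact V.add_mem ((mem_coeffSubmodule e hC V).mp (h n ▸ Submodule.mem_top)) ih
  rw [eq_top_iff]
  intro w _
  simpa using hall (e w)

theorem frobenius_mem_coeffSubmodule {p : ℕ} {F : M →+ M} {G : N →+ N}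
    (hGF : ∀ (u : M) (n : ℕ),
      G (e.symm (Finsupp.single n u)) = e.symm (Finsupp.single (p * n + p - 1) (F u)))
    (hGV : ∀ w ∈ V, G w ∈ V) {n : ℕ} {u : M} (hu : u ∈ coeffSubmodule e hC V n) :
    F u ∈ coeffSubmodule e hC V (p * n + p - 1) := by
  rw [mem_coeffSubmodule, ← hGF]
  exact hGV _ hu

theorem frobenius_mem_coeffSubmodule_self
    (hX : ∀ (w : N) (n : ℕ), e ((X : R⟦X⟧) • w) n = e w (n + 1))
    {p : ℕ} (hp : 0 < p) {F : M →+ M} {G : N →+ N}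
    (hGF : ∀ (u : M) (n : ℕ),
      G (e.symm (Finsupp.single n u)) = e.symm (Finsupp.single (p * n + p - 1) (F u)))
    (hGV : ∀ w ∈ V, G w ∈ V) {n : ℕ} {u : M} (hu : u ∈ coeffSubmodule e hC V n) :
    F u ∈ coeffSubmodule e hC V n := by
  have hdeg : n ≤ p * n + p - 1 := by
    have := Nat.le_mul_of_pos_left n hp
    omega
  exact coeffSubmodule_antitone e hC V hX hdeg (frobenius_mem_coeffSubmodule e hC V hGF hGV hu)

theorem coeffSubmodule_ne_bot
    (hX : ∀ (w : N) (n : ℕ), e ((X : R⟦X⟧) • w) n = e w (n + 1))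
    {p : ℕ} (hp : 2 ≤ p) {F : M →+ M} (hF : Function.Injective F) {G : N →+ N}
    (hGF : ∀ (u : M) (n : ℕ),
      G (e.symm (Finsupp.single n u)) = e.symm (Finsupp.single (p * n + p - 1) (F u)))
    (hGV : ∀ w ∈ V, G w ∈ V) (h0 : coeffSubmodule e hC V 0 ≠ ⊥) (n : ℕ) :
    coeffSubmodule e hC V n ≠ ⊥ := by
  induction n with
  | zero => exact h0
  | succ n ih =>
    obtain ⟨u, hu, hu0⟩ := (Submodule.ne_bot_iff _).mp ih
    have hdeg : n + 1 ≤ p * n + p - 1 := by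
      have := Nat.mul_le_mul_right n hp
      omega
    refine (Submodule.ne_bot_iff _).mpr ⟨F u, ?_, (map_ne_zero_iff F hF).mpr hu0⟩
    exact coeffSubmodule_antitone e hC V hX hdeg (frobenius_mem_coeffSubmodule e hC V hGF hGV hu)

end InverseSeries

open InverseSeries

/-- `N` is modelled by `e : N ≃+ (ℕ →₀ M)`, index `n` recording the coefficient of
`x^{-(n+1)}`. -/
theorem stmt14_general (R : Type) [CommRing R] (p : ℕ) (hp : p.Prime)
    (M : Type) [AddCommGroup M] [Module R M] (F : M →+ M)
    (hFinj : Function.Injective F)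
    (hsimple : ∀ V : Submodule R M, (∀ v ∈ V, F v ∈ V) → V = ⊥ ∨ V = ⊤)
    (N : Type) [AddCommGroup N] [Module (PowerSeries R) N]
    (e : N ≃+ (ℕ →₀ M))
    (hC : ∀ (r : R) (w : N), e ((PowerSeries.C r) • w) = r • e w)
    (hX : ∀ (w : N) (n : ℕ), e ((PowerSeries.X : PowerSeries R) • w) n = e w (n + 1))
    (G : N →+ N)
    (hGF : ∀ (u : M) (n : ℕ),
        G (e.symm (Finsupp.single n u)) = e.symm (Finsupp.single (p * n + p - 1) (F u))) :
    ∀ V : Submodule (PowerSeries R) N, (∀ w ∈ V, G w ∈ V) → V = ⊥ ∨ V = ⊤ := by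
  intro V hGV
  refine or_iff_not_imp_left.mpr fun hV => ?_
  have hne := coeffSubmodule_ne_bot e hC V hX hp.two_le hFinj hGF hGV
    (coeffSubmodule_zero_ne_bot e hC V hX hV)
  refine eq_top_of_forall_coeffSubmodule_eq_top e hC V fun n => ?_
  have hstable : ∀ u ∈ coeffSubmodule e hC V n, F u ∈ coeffSubmodule e hC V n :=
    fun _ hu => frobenius_mem_coeffSubmodule_self e hC V hX hp.pos hGF hGV hu
  exact (hsimple _ hstable).resolve_left (hne n)

/-- Let `(R, m)` be a local ring of prime characteristic `p` and `M` a simple `R{F}`-module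
on which `F` acts injectively.  Let `N = M⟨x⁻¹⟩ = ⊕_{n ≥ 1} M x⁻ⁿ` (realized as an
`R[[x]]`-module additively isomorphic to `ℕ →₀ M`, index `n` recording the coefficient of
`x^{-(n+1)}`, with `R` acting coordinatewise and `x` acting as the shift), equipped with the
Frobenius action `G(u x⁻ⁿ) = F(u) x^{-pn}`.  Then `N` is a simple `R[[x]]{F}`-module. -/
theorem stmt14 (R : Type) [CommRing R] [IsLocalRing R] (p : ℕ) (hp : p.Prime) [CharP R p]
    (M : Type) [AddCommGroup M] [Module R M] [Nontrivial M] (F : M →+ M)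
    (hF : ∀ (r : R) (u : M), F (r • u) = r ^ p • F u)
    (hFinj : Function.Injective F)
    (hsimple : ∀ V : Submodule R M, (∀ v ∈ V, F v ∈ V) → V = ⊥ ∨ V = ⊤)
    (N : Type) [AddCommGroup N] [Module (PowerSeries R) N]
    (e : N ≃+ (ℕ →₀ M))
    (hC : ∀ (r : R) (w : N), e ((PowerSeries.C r) • w) = r • e w)
    (hX : ∀ (w : N) (n : ℕ), e ((PowerSeries.X : PowerSeries R) • w) n = e w (n + 1))
    (G : N →+ N)
    (hG : ∀ (s : PowerSeries R) (w : N), G (s • w) = s ^ p • G w)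
    (hGF : ∀ (u : M) (n : ℕ),
        G (e.symm (Finsupp.single n u)) = e.symm (Finsupp.single (p * n + p - 1) (F u))) :
    ∀ V : Submodule (PowerSeries R) N, (∀ w ∈ V, G w ∈ V) → V = ⊥ ∨ V = ⊤ :=
  stmt14_general R p hp M F hFinj hsimple N e hC hX G hGF
end

section
/- Let (R, m) be a local ring of prime characteristic p and let M be an R{F}-module admitting a finite filtration 0 = M_0 ⊆ M_1 ⊆ … ⊆ M_s = M by F-stable submodules such that each factor M_j/M_{j-1} is a simple R{F}-module with nonzero (hence injective) F-action. Then M is anti-nilpotent: for every pair of F-stable submodules V ⊆ V' of M, F acts injectively on V'/V. -/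
/-- If an `R{F}`-module `M` over a local ring of prime characteristic `p` admits a finite
filtration `0 = M₀ ⊆ M₁ ⊆ … ⊆ M_s = M` by `F`-stable submodules whose factors
`M_j/M_{j-1}` are simple `R{F}`-modules with nonzero (hence injective) `F`-action, then `M`
is anti-nilpotent: `F` acts injectively on every subquotient `V'/V` by `F`-stable
submodules.  All conditions on factors and subquotients are expressed elementwise. -/
theorem stmt15 (R : Type) [CommRing R] [IsLocalRing R] (p : ℕ) (hp : p.Prime) [CharP R p]
    (M : Type) [AddCommGroup M] [Module R M] (F : M →+ M)
    (hF : ∀ (r : R) (u : M), F (r • u) = r ^ p • F u)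
    (s : ℕ) (filt : Fin (s + 1) → Submodule R M)
    (hmono : Monotone filt) (hbot : filt 0 = ⊥) (htop : filt (Fin.last s) = ⊤)
    (hstable : ∀ j, ∀ x ∈ filt j, F x ∈ filt j)
    -- each factor is nonzero:
    (hnontriv : ∀ j : Fin s, filt j.castSucc ≠ filt j.succ)
    -- each factor `filt j.succ / filt j.castSucc` is simple as an `R{F}`-module:
    (hsimple : ∀ j : Fin s, ∀ V : Submodule R M, (∀ x ∈ V, F x ∈ V) →
        filt j.castSucc ≤ V → V ≤ filt j.succ → V = filt j.castSucc ∨ V = filt j.succ)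
    -- `F` acts nontrivially (indeed injectively) on each factor:
    (hinj : ∀ j : Fin s, ∀ x ∈ filt j.succ, F x ∈ filt j.castSucc → x ∈ filt j.castSucc) :
    ∀ V V' : Submodule R M, (∀ x ∈ V, F x ∈ V) → (∀ x ∈ V', F x ∈ V') → V ≤ V' →
      ∀ x ∈ V', F x ∈ V → x ∈ V := by
  intro V V' hV hV' hVV'
  -- Key claim, by induction on the filtration index.
  have key : ∀ j : Fin (s + 1), ∀ x ∈ V', x ∈ filt j → F x ∈ V → x ∈ V := by
    intro j
    induction j using Fin.induction with
    | zero =>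
      intro x _ hx _
      rw [hbot, Submodule.mem_bot] at hx
      simpa [hx] using V.zero_mem
    | succ j ih =>
      intro x hxV' hxj hFx
      set Z : Submodule R M := filt j.castSucc ⊔ (V ⊓ filt j.succ) with hZ
      have hZstable : ∀ y ∈ Z, F y ∈ Z := by
        intro y hy
        rw [hZ, Submodule.mem_sup] at hy
        obtain ⟨a, ha, b, hb, rfl⟩ := hy
        rw [map_add]
        exact Z.add_mem
          (Submodule.mem_sup_left (hstable _ a ha))
          (Submodule.mem_sup_right ⟨hV b hb.1, hstable _ b hb.2⟩)
      have hle1 : filt j.castSucc ≤ Z := le_sup_left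
      have hle2 : Z ≤ filt j.succ :=
        sup_le (hmono (Fin.castSucc_le_succ j)) inf_le_right
      rcases hsimple j Z hZstable hle1 hle2 with hcase | hcase
      · -- V ⊓ filt j.succ ≤ filt j.castSucc
        have hsub : V ⊓ filt j.succ ≤ filt j.castSucc := by
          rw [← hcase]; exact le_sup_right
        have hFxj : F x ∈ filt j.castSucc := hsub ⟨hFx, hstable _ x hxj⟩
        have hxj' : x ∈ filt j.castSucc := hinj j x hxj hFxj
        exact ih x hxV' hxj' hFx
      · -- x ∈ filt j.castSucc + (V ⊓ filt j.succ)
        have hxZ : x ∈ Z := by rw [hcase]; exact hxj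
        rw [hZ, Submodule.mem_sup] at hxZ
        obtain ⟨a, ha, b, hb, hab⟩ := hxZ
        have haV' : a ∈ V' := by
          have : a = x - b := by rw [← hab]; abel
          rw [this]; exact V'.sub_mem hxV' (hVV' hb.1)
        have hFa : F a ∈ V := by
          have : a = x - b := by rw [← hab]; abel
          rw [this, map_sub]
          exact V.sub_mem hFx (hV b hb.1)
        have haV : a ∈ V := ih a haV' ha hFa
        have : x = a + b := hab.symm
        rw [this]
        exact V.add_mem haV hb.1
  intro x hxV' hFx
  exact key (Fin.last s) x hxV' (by rw [htop]; trivial) hFx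
end

section
/- Let R be a commutative ring of prime characteristic p with nilradical J satisfying J^t = 0 for some t, and let M be an R{F}-module. Then M has finite length as an R{F}-module if and only if JM has finite length as an R-module and M/JM has finite length as an (R/J){F}-module. -/
section Aux

variable {α : Type*} [PartialOrder α]

lemma aux_exists_strictMono_comp {f : ℕ → α} (hf : Monotone f)
    (h : ¬ ∃ n, ∀ m ≥ n, f m = f n) : ∃ g : ℕ → ℕ, StrictMono (f ∘ g) := by
  push_neg at h
  choose m hm hne using h
  refine ⟨fun k => Nat.rec 0 (fun _ x => m x) k, strictMono_nat_of_lt_succ fun k => ?_⟩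
  exact lt_of_le_of_ne (hf (hm _)) (Ne.symm (hne _))

lemma aux_exists_strictAnti_comp {f : ℕ → α} (hf : Antitone f)
    (h : ¬ ∃ n, ∀ m ≥ n, f m = f n) : ∃ g : ℕ → ℕ, StrictAnti (f ∘ g) := by
  push_neg at h
  choose m hm hne using h
  refine ⟨fun k => Nat.rec 0 (fun _ x => m x) k, strictAnti_nat_of_succ_lt fun k => ?_⟩
  exact lt_of_le_of_ne (hf (hm _)) (hne _)

end Aux

section Core

variable {R M : Type} [CommRing R] [AddCommGroup M] [Module R M]
  {p t : ℕ} (hp2 : 2 ≤ p) (hnil : (nilradical R) ^ t = 0)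
  {F : M →+ M} (hF : ∀ (r : R) (u : M), F (r • u) = r ^ p • F u)

include hp2 hF in
/-- `F` maps `J^i • M` into `J^(i+1) • M` for `i ≥ 1`. -/
lemma aux_P_step (i : ℕ) (hi : 1 ≤ i) :
    ∀ x ∈ (nilradical R ^ i) • (⊤ : Submodule R M),
      F x ∈ (nilradical R ^ (i + 1)) • (⊤ : Submodule R M) := by
  intro x hx
  refine Submodule.smul_induction_on hx ?_ ?_
  · intro r hr u _
    rw [hF]
    refine Submodule.smul_mem_smul ?_ trivial
    have h1 : r ^ p ∈ (nilradical R ^ i) ^ p := Ideal.pow_mem_pow hr p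
    rw [← pow_mul] at h1
    exact Ideal.pow_le_pow_right (by nlinarith) h1
  · intro a b ha hb
    rw [map_add]
    exact Submodule.add_mem _ ha hb

include hnil in
lemma aux_P_bot (i : ℕ) (hi : t ≤ i) :
    (nilradical R ^ i) • (⊤ : Submodule R M) = ⊥ := by
  have : (nilradical R : Ideal R) ^ i ≤ nilradical R ^ t := Ideal.pow_le_pow_right hi
  rw [hnil] at this
  rw [le_bot_iff.mp this]
  exact Submodule.bot_smul _

lemma aux_P_anti {i j : ℕ} (hij : i ≤ j) :
    (nilradical R ^ j) • (⊤ : Submodule R M) ≤ (nilradical R ^ i) • (⊤ : Submodule R M) :=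
  Submodule.smul_mono_left (Ideal.pow_le_pow_right hij)

include hp2 hnil hF in
/-- Any monotone chain of submodules of `J • M` stabilizes, assuming there is no strictly
increasing chain of `F`-stable submodules. -/
lemma aux_mono_stab
    (hchain : ¬ ∃ c : ℕ → Submodule R M, (∀ n, ∀ x ∈ c n, F x ∈ c n) ∧ StrictMono c)
    (d : ℕ → Submodule R M) (hd : Monotone d)
    (hdN : ∀ n, d n ≤ (nilradical R) • (⊤ : Submodule R M)) :
    ∃ k, ∀ m ≥ k, d m = d k := by
  set P : ℕ → Submodule R M := fun i => (nilradical R ^ i) • ⊤ with hP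
  have key : ∀ n i, t - i ≤ n → 1 ≤ i → ∃ k, ∀ m ≥ k, d m ⊓ P i = d k ⊓ P i := by
    intro n
    induction n with
    | zero =>
      intro i hti _
      have : P i = ⊥ := aux_P_bot hnil i (by omega)
      exact ⟨0, fun m _ => by rw [this, inf_bot_eq, inf_bot_eq]⟩
    | succ n ih =>
      intro i hti hi
      by_cases hit : t ≤ i
      · have : P i = ⊥ := aux_P_bot hnil i hit
        exact ⟨0, fun m _ => by rw [this, inf_bot_eq, inf_bot_eq]⟩
      · obtain ⟨k₁, hk₁⟩ := ih (i + 1) (by omega) (by omega)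
        set e : ℕ → Submodule R M := fun m => (d m ⊓ P i) ⊔ P (i + 1) with he
        have hemono : Monotone e := fun a b hab =>
          sup_le_sup_right (inf_le_inf_right _ (hd hab)) _
        have hestab : ∃ k, ∀ m ≥ k, e m = e k := by
          by_contra hcon
          obtain ⟨g, hg⟩ := aux_exists_strictMono_comp hemono hcon
          refine hchain ⟨e ∘ g, fun m x hx => ?_, hg⟩
          simp only [Function.comp_apply, he] at hx ⊢
          obtain ⟨a, ha, b, hb, rfl⟩ := Submodule.mem_sup.mp hx
          rw [map_add]
          refine Submodule.add_mem _ (Submodule.mem_sup_right ?_) (Submodule.mem_sup_right ?_)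
          · exact aux_P_step hp2 hF i hi a ha.2
          · exact aux_P_anti (by omega) (aux_P_step hp2 hF (i + 1) (by omega) b hb)
        obtain ⟨k₂, hk₂⟩ := hestab
        refine ⟨max k₁ k₂, fun m hm => ?_⟩
        have h1 : d m ⊓ P (i + 1) = d (max k₁ k₂) ⊓ P (i + 1) := by
          rw [hk₁ m (le_trans (le_max_left _ _) hm), hk₁ (max k₁ k₂) (le_max_left _ _)]
        have h2 : e m = e (max k₁ k₂) := by
          rw [hk₂ m (le_trans (le_max_right _ _) hm), hk₂ (max k₁ k₂) (le_max_right _ _)]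
        have hle : d (max k₁ k₂) ⊓ P i ≤ d m ⊓ P i := inf_le_inf_right _ (hd hm)
        have hPP : P i ⊓ P (i + 1) = P (i + 1) := inf_eq_right.mpr (aux_P_anti (Nat.le_succ i))
        refine (eq_of_le_of_inf_le_of_sup_le (z := P (i + 1)) hle ?_ ?_).symm
        · rw [inf_assoc, inf_assoc, hPP]
          exact le_of_eq h1
        · exact le_of_eq h2
  obtain ⟨k, hk⟩ := key t 1 (by omega) le_rfl
  refine ⟨k, fun m hm => ?_⟩
  have h1 : d m ⊓ P 1 = d m := inf_of_le_left (by simpa [hP] using hdN m)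
  have h2 : d k ⊓ P 1 = d k := inf_of_le_left (by simpa [hP] using hdN k)
  rw [← h1, ← h2, hk m hm]

include hp2 hnil hF in
lemma aux_anti_stab
    (hchain : ¬ ∃ c : ℕ → Submodule R M, (∀ n, ∀ x ∈ c n, F x ∈ c n) ∧ StrictAnti c)
    (d : ℕ → Submodule R M) (hd : Antitone d)
    (hdN : ∀ n, d n ≤ (nilradical R) • (⊤ : Submodule R M)) :
    ∃ k, ∀ m ≥ k, d m = d k := by
  set P : ℕ → Submodule R M := fun i => (nilradical R ^ i) • ⊤ with hP
  have key : ∀ n i, t - i ≤ n → 1 ≤ i → ∃ k, ∀ m ≥ k, d m ⊓ P i = d k ⊓ P i := by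
    intro n
    induction n with
    | zero =>
      intro i hti _
      have : P i = ⊥ := aux_P_bot hnil i (by omega)
      exact ⟨0, fun m _ => by rw [this, inf_bot_eq, inf_bot_eq]⟩
    | succ n ih =>
      intro i hti hi
      by_cases hit : t ≤ i
      · have : P i = ⊥ := aux_P_bot hnil i hit
        exact ⟨0, fun m _ => by rw [this, inf_bot_eq, inf_bot_eq]⟩
      · obtain ⟨k₁, hk₁⟩ := ih (i + 1) (by omega) (by omega)
        set e : ℕ → Submodule R M := fun m => (d m ⊓ P i) ⊔ P (i + 1) with he
        have hemono : Antitone e := fun a b hab =>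
          sup_le_sup_right (inf_le_inf_right _ (hd hab)) _
        have hestab : ∃ k, ∀ m ≥ k, e m = e k := by
          by_contra hcon
          obtain ⟨g, hg⟩ := aux_exists_strictAnti_comp hemono hcon
          refine hchain ⟨e ∘ g, fun m x hx => ?_, hg⟩
          simp only [Function.comp_apply, he] at hx ⊢
          obtain ⟨a, ha, b, hb, rfl⟩ := Submodule.mem_sup.mp hx
          rw [map_add]
          refine Submodule.add_mem _ (Submodule.mem_sup_right ?_) (Submodule.mem_sup_right ?_)
          · exact aux_P_step hp2 hF i hi a ha.2
          · exact aux_P_anti (by omega) (aux_P_step hp2 hF (i + 1) (by omega) b hb)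
        obtain ⟨k₂, hk₂⟩ := hestab
        refine ⟨max k₁ k₂, fun m hm => ?_⟩
        have h1 : d m ⊓ P (i + 1) = d (max k₁ k₂) ⊓ P (i + 1) := by
          rw [hk₁ m (le_trans (le_max_left _ _) hm), hk₁ (max k₁ k₂) (le_max_left _ _)]
        have h2 : e m = e (max k₁ k₂) := by
          rw [hk₂ m (le_trans (le_max_right _ _) hm), hk₂ (max k₁ k₂) (le_max_right _ _)]
        have hle : d m ⊓ P i ≤ d (max k₁ k₂) ⊓ P i := inf_le_inf_right _ (hd hm)
        have hPP : P i ⊓ P (i + 1) = P (i + 1) := inf_eq_right.mpr (aux_P_anti (Nat.le_succ i))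
        refine eq_of_le_of_inf_le_of_sup_le (z := P (i + 1)) hle ?_ ?_
        · rw [inf_assoc, inf_assoc, hPP]
          exact le_of_eq h1.symm
        · exact le_of_eq h2.symm
  obtain ⟨k, hk⟩ := key t 1 (by omega) le_rfl
  refine ⟨k, fun m hm => ?_⟩
  have h1 : d m ⊓ P 1 = d m := inf_of_le_left (by simpa [hP] using hdN m)
  have h2 : d k ⊓ P 1 = d k := inf_of_le_left (by simpa [hP] using hdN k)
  rw [← h1, ← h2, hk m hm]

end Core

/-- Let `R` be a commutative ring of prime characteristic `p` with nilradical `J` satisfying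
`J ^ t = 0`, and let `M` be an `R{F}`-module.  Then `M` has finite length in the category of
`R{F}`-modules (equivalently, the lattice of `F`-stable submodules has no infinite strictly
increasing and no infinite strictly decreasing chains) if and only if `J • M` has finite
length as an `R`-module and `M/JM` has finite length as an `(R/J){F}`-module (equivalently,
the lattice of `F`-stable submodules of `M` containing `J • M`, which corresponds to the
lattice of `F`-stable `(R/J)`-submodules of `M/JM`, has no infinite strictly monotone
chains). -/
theorem stmt16 (R : Type) [CommRing R] (p : ℕ) (hp : p.Prime) [CharP R p]
    (t : ℕ) (hnil : (nilradical R) ^ t = 0)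
    (M : Type) [AddCommGroup M] [Module R M] (F : M →+ M)
    (hF : ∀ (r : R) (u : M), F (r • u) = r ^ p • F u) :
    ((¬ ∃ c : ℕ → Submodule R M, (∀ n, ∀ x ∈ c n, F x ∈ c n) ∧ StrictMono c) ∧
     (¬ ∃ c : ℕ → Submodule R M, (∀ n, ∀ x ∈ c n, F x ∈ c n) ∧ StrictAnti c))
    ↔ (IsFiniteLength R ↥((nilradical R) • (⊤ : Submodule R M)) ∧
       (¬ ∃ c : ℕ → Submodule R M, (∀ n, (nilradical R) • (⊤ : Submodule R M) ≤ c n ∧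
            ∀ x ∈ c n, F x ∈ c n) ∧ StrictMono c) ∧
       (¬ ∃ c : ℕ → Submodule R M, (∀ n, (nilradical R) • (⊤ : Submodule R M) ≤ c n ∧
            ∀ x ∈ c n, F x ∈ c n) ∧ StrictAnti c)) := by
  have hp2 : 2 ≤ p := hp.two_le
  set N : Submodule R M := (nilradical R) • ⊤ with hN
  -- N is F-stable
  have hNF : ∀ x ∈ N, F x ∈ N := by
    intro x hx
    refine Submodule.smul_induction_on hx ?_ ?_
    · intro r hr u _
      rw [hF]
      refine Submodule.smul_mem_smul ?_ trivial
      have : r ^ p = r ^ (p - 1) * r := by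
        conv_lhs => rw [show p = (p - 1) + 1 by omega]
        rw [pow_succ]
      rw [this]
      exact Ideal.mul_mem_left _ _ hr
    · intro a b ha hb
      rw [map_add]
      exact Submodule.add_mem _ ha hb
  constructor
  · rintro ⟨hMono, hAnti⟩
    refine ⟨?_, ?_, ?_⟩
    · rw [isFiniteLength_iff_isNoetherian_isArtinian]
      constructor
      · refine monotone_stabilizes_iff_noetherian.mp fun f => ?_
        have hd : Monotone fun n => (f n).map N.subtype :=
          fun a b hab => Submodule.map_mono (f.monotone hab)
        obtain ⟨k, hk⟩ := aux_mono_stab hp2 hnil hF hMono _ hd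
          (fun n => Submodule.map_subtype_le _ _)
        exact ⟨k, fun m hm =>
          (Submodule.map_injective_of_injective N.injective_subtype (hk m hm)).symm⟩
      · refine monotone_stabilizes_iff_artinian.mp fun f => ?_
        have hd : Antitone fun n => (OrderDual.ofDual (f n)).map N.subtype :=
          fun a b hab => Submodule.map_mono (f.monotone hab)
        obtain ⟨k, hk⟩ := aux_anti_stab hp2 hnil hF hAnti _ hd
          (fun n => Submodule.map_subtype_le _ _)
        exact ⟨k, fun m hm =>
          (Submodule.map_injective_of_injective N.injective_subtype (hk m hm)).symm⟩
    · rintro ⟨c, hc, hsm⟩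
      exact hMono ⟨c, fun n => (hc n).2, hsm⟩
    · rintro ⟨c, hc, hsa⟩
      exact hAnti ⟨c, fun n => (hc n).2, hsa⟩
  · rintro ⟨hfin, hup, hdown⟩
    rw [isFiniteLength_iff_isNoetherian_isArtinian] at hfin
    obtain ⟨hNoe, hArt⟩ := hfin
    have hmc : ∀ c : Submodule R M, N ⊓ (c ⊓ N) = c ⊓ N :=
      fun c => inf_eq_right.mpr inf_le_right
    constructor
    · rintro ⟨c, hc, hsm⟩
      -- the chain `c n ⊓ N` stabilizes by Noetherianity of `N`
      obtain ⟨k₁, hk₁⟩ := monotone_stabilizes_iff_noetherian.mpr hNoe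
        ⟨fun n => (c n ⊓ N).comap N.subtype,
         fun a b hab => Submodule.comap_mono (inf_le_inf_right _ (hsm.monotone hab))⟩
      have hinf : ∀ m ≥ k₁, c m ⊓ N = c k₁ ⊓ N := by
        intro m hm
        have := congrArg (Submodule.map N.subtype)
          (show ((c k₁ ⊓ N).comap N.subtype) = ((c m ⊓ N).comap N.subtype) from hk₁ m hm)
        rw [Submodule.map_comap_subtype, Submodule.map_comap_subtype, hmc, hmc] at this
        exact this.symm
      -- the chain `c n ⊔ N` stabilizes since it is F-stable and contains N
      have hsF : ∀ n, N ≤ c n ⊔ N ∧ ∀ x ∈ c n ⊔ N, F x ∈ c n ⊔ N := by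
        refine fun n => ⟨le_sup_right, fun x hx => ?_⟩
        obtain ⟨a, ha, b, hb, rfl⟩ := Submodule.mem_sup.mp hx
        rw [map_add]
        exact Submodule.add_mem _ (Submodule.mem_sup_left (hc n a ha))
          (Submodule.mem_sup_right (hNF b hb))
      have hsup : ∃ k, ∀ m ≥ k, c m ⊔ N = c k ⊔ N := by
        by_contra hcon
        obtain ⟨g, hg⟩ := aux_exists_strictMono_comp
          (f := fun n => c n ⊔ N) (fun a b hab => sup_le_sup_right (hsm.monotone hab) _) hcon
        exact hup ⟨_, fun n => hsF (g n), hg⟩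
      obtain ⟨k₂, hk₂⟩ := hsup
      set k := max k₁ k₂ with hkdef
      have hck : c k = c (k + 1) := by
        refine eq_of_le_of_inf_le_of_sup_le (z := N) (hsm.monotone (Nat.le_succ k)) ?_ ?_
        · rw [hinf (k + 1) (le_trans (le_max_left _ _) (Nat.le_succ k)),
            hinf k (le_max_left _ _)]
        · rw [hk₂ (k + 1) (le_trans (le_max_right _ _) (Nat.le_succ k)),
            hk₂ k (le_max_right _ _)]
      exact lt_irrefl _ (hck ▸ hsm (Nat.lt_succ_self k))
    · rintro ⟨c, hc, hsa⟩
      obtain ⟨k₁, hk₁⟩ := monotone_stabilizes_iff_artinian.mpr hArt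
        ⟨fun n => OrderDual.toDual ((c n ⊓ N).comap N.subtype),
         fun a b hab => Submodule.comap_mono (inf_le_inf_right _ (hsa.antitone hab))⟩
      have hinf : ∀ m ≥ k₁, c m ⊓ N = c k₁ ⊓ N := by
        intro m hm
        have := congrArg (Submodule.map N.subtype)
          (show ((c k₁ ⊓ N).comap N.subtype) = ((c m ⊓ N).comap N.subtype) from hk₁ m hm)
        rw [Submodule.map_comap_subtype, Submodule.map_comap_subtype, hmc, hmc] at this
        exact this.symm
      have hsF : ∀ n, N ≤ c n ⊔ N ∧ ∀ x ∈ c n ⊔ N, F x ∈ c n ⊔ N := by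
        refine fun n => ⟨le_sup_right, fun x hx => ?_⟩
        obtain ⟨a, ha, b, hb, rfl⟩ := Submodule.mem_sup.mp hx
        rw [map_add]
        exact Submodule.add_mem _ (Submodule.mem_sup_left (hc n a ha))
          (Submodule.mem_sup_right (hNF b hb))
      have hsup : ∃ k, ∀ m ≥ k, c m ⊔ N = c k ⊔ N := by
        by_contra hcon
        obtain ⟨g, hg⟩ := aux_exists_strictAnti_comp
          (f := fun n => c n ⊔ N) (fun a b hab => sup_le_sup_right (hsa.antitone hab) _) hcon
        exact hdown ⟨_, fun n => hsF (g n), hg⟩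
      obtain ⟨k₂, hk₂⟩ := hsup
      set k := max k₁ k₂ with hkdef
      have hck : c (k + 1) = c k := by
        refine eq_of_le_of_inf_le_of_sup_le (z := N) (hsa.antitone (Nat.le_succ k)) ?_ ?_
        · rw [hinf (k + 1) (le_trans (le_max_left _ _) (Nat.le_succ k)),
            hinf k (le_max_left _ _)]
        · rw [hk₂ (k + 1) (le_trans (le_max_right _ _) (Nat.le_succ k)),
            hk₂ k (le_max_right _ _)]
      exact lt_irrefl _ (hck ▸ hsa (Nat.lt_succ_self k))
end

section
/- Let R be a local ring, let x_1, …, x_d be a regular sequence in R, let a ≥ b ≥ 1 be integers. Then the colon ideal (x_1^a, …, x_d^a) :_R (x_1 ⋯ x_d)^b equals (x_1^{a−b}, …, x_d^{a−b}). -/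
/-!
Weak regularity is taken modulo an arbitrary base ideal `N`, so that inductions along a
sequence may enlarge `N`.
Two facts about weakly regular sequences carry the argument. First, the first element of a
weakly regular sequence is a nonzerodivisor modulo the ideal of the others. Second, if `u :: l`
and `v :: l` are weakly regular then so is `u * v :: l`: multiplication by `u` embeds `R/(N, v)`
into `R/(N, uv)` with cokernel `R/(N, u)`, and weak regularity passes to such extensions; hence
powers of a weakly regular sequence are weakly regular. Now if
`r (x₁ ⋯ x_d)^b ∈ (x₁^a, …, x_d^a)`, cancelling `x₁^b` modulo `(x₂^a, …, x_d^a)` gives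
`r (x₂ ⋯ x_d)^b ∈ (x₁^{a-b}, x₂^a, …, x_d^a)`, and we conclude by induction on the
sequence, with `x₁^{a-b}` added to the base ideal.
-/

open Ideal

variable {R : Type*} [CommRing R]

def IsRegularMod (N : Ideal R) (y : R) : Prop := ∀ r, r * y ∈ N → r ∈ N

def IsWeaklyRegularMod : Ideal R → List R → Prop
  | _, [] => True
  | N, y :: l => IsRegularMod N y ∧ IsWeaklyRegularMod (N ⊔ span {y}) l

theorem Ideal.mem_sup_span_singleton {I : Ideal R} {x y : R} :
    x ∈ I ⊔ span {y} ↔ ∃ a, ∃ b ∈ I, a * y + b = x := by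
  rw [sup_comm]
  exact mem_span_singleton_sup

theorem Ideal.ofList_ofFn {n : ℕ} (f : Fin n → R) :
    ofList (List.ofFn f) = span (Set.range f) := by
  simp only [ofList, List.mem_ofFn']
  rfl

section IsRegularMod

variable {N : Ideal R} {y z u v : R}

theorem isRegularMod_one : IsRegularMod N 1 := fun r hr => by simpa using hr

theorem isRegularMod_top (y : R) : IsRegularMod ⊤ y := fun _ _ => Submodule.mem_top

theorem IsRegularMod.mul (hu : IsRegularMod N u) (hv : IsRegularMod N v) :
    IsRegularMod N (u * v) :=
  fun r hr => hu r (hv (r * u) (by rwa [mul_assoc]))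

theorem IsRegularMod.pow (hy : IsRegularMod N y) : ∀ c : ℕ, IsRegularMod N (y ^ c)
  | 0 => by simpa using isRegularMod_one
  | c + 1 => by rw [pow_succ]; exact (hy.pow c).mul hy

theorem IsRegularMod.colon_sup_span_mul_le (hu : IsRegularMod N u) :
    (N ⊔ span {u * v}).colon (span {u}) ≤ N ⊔ span {v} := by
  intro t ht
  obtain ⟨s, n, hn, hsum⟩ := mem_sup_span_singleton.mp (mem_colon_span_singleton.mp ht)
  have hdiff : t - s * v ∈ N := hu _ <| by
    rwa [show (t - s * v) * u = n by linear_combination -hsum]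
  exact mem_sup_span_singleton.mpr ⟨s, _, hdiff, by ring⟩

theorem IsRegularMod.mem_sup_span_pow_sub {a b : ℕ} (hy : IsRegularMod N y) (hba : b ≤ a)
    {r : R} (hr : r * y ^ b ∈ N ⊔ span {y ^ a}) : r ∈ N ⊔ span {y ^ (a - b)} := by
  rw [← Nat.add_sub_cancel' hba, pow_add] at hr
  exact (hy.pow b).colon_sup_span_mul_le (mem_colon_span_singleton.mpr hr)

theorem IsRegularMod.sup_span_singleton (hy : IsRegularMod N y)
    (hz : IsRegularMod (N ⊔ span {y}) z) : IsRegularMod (N ⊔ span {z}) y := by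
  intro r hr
  obtain ⟨s, n, hn, hsum⟩ := mem_sup_span_singleton.mp hr
  obtain ⟨t, n', hn', rfl⟩ := mem_sup_span_singleton.mp <|
    hz s (mem_sup_span_singleton.mpr ⟨r, -n, N.neg_mem hn, by linear_combination -hsum⟩)
  have hdiff : r - t * z ∈ N := hy _ <| by
    rw [show (r - t * z) * y = n' * z + n by linear_combination -hsum]
    exact N.add_mem (N.mul_mem_right z hn') hn
  exact mem_sup_span_singleton.mpr ⟨t, _, hdiff, by ring⟩

end IsRegularMod

section IsWeaklyRegularMod

variable {N : Ideal R} {y z u v : R}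

theorem isWeaklyRegularMod_top : ∀ l : List R, IsWeaklyRegularMod ⊤ l
  | [] => trivial
  | y :: l => ⟨isRegularMod_top y, by rw [top_sup_eq]; exact isWeaklyRegularMod_top l⟩

theorem IsRegularMod.sup_span_mul
    (hphi : (N ⊔ span {u * v}).colon (span {u}) ≤ N ⊔ span {v})
    (hu : IsRegularMod (N ⊔ span {u}) z) (hv : IsRegularMod (N ⊔ span {v}) z) :
    IsRegularMod (N ⊔ span {u * v}) z := by
  intro r hr
  have hle : N ⊔ span {u * v} ≤ N ⊔ span {u} :=
    sup_le_sup_left (span_singleton_le_span_singleton.mpr (dvd_mul_right u v)) N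
  obtain ⟨t, n, hn, rfl⟩ := mem_sup_span_singleton.mp (hu _ (hle hr))
  have htz : t * z * u ∈ N ⊔ span {u * v} := by
    rw [show t * z * u = (t * u + n) * z - n * z by ring]
    exact sub_mem hr (mem_sup_left (N.mul_mem_right z hn))
  obtain ⟨w, n', hn', rfl⟩ :=
    mem_sup_span_singleton.mp (hv _ (hphi (mem_colon_span_singleton.mpr htz)))
  exact mem_sup_span_singleton.mpr
    ⟨w, n' * u + n, N.add_mem (N.mul_mem_right u hn') hn, by ring⟩

theorem colon_sup_span_mul_le_sup_span
    (hphi : (N ⊔ span {u * v}).colon (span {u}) ≤ N ⊔ span {v})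
    (hz : IsRegularMod (N ⊔ span {u}) z) :
    (N ⊔ span {z} ⊔ span {u * v}).colon (span {u}) ≤ N ⊔ span {z} ⊔ span {v} := by
  intro t ht
  obtain ⟨s, m, hm, hsum⟩ := mem_sup_span_singleton.mp (mem_colon_span_singleton.mp ht)
  obtain ⟨c, n, hn, rfl⟩ := mem_sup_span_singleton.mp hm
  obtain ⟨e, n', hn', rfl⟩ := mem_sup_span_singleton.mp <| hz c <|
    mem_sup_span_singleton.mpr ⟨t - s * v, -n, N.neg_mem hn, by linear_combination -hsum⟩
  have hdiff : t - e * z ∈ N ⊔ span {v} := hphi <| mem_colon_span_singleton.mpr <|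
    mem_sup_span_singleton.mpr ⟨s, n' * z + n, N.add_mem (N.mul_mem_right z hn') hn,
      by linear_combination hsum⟩
  obtain ⟨f, m', hm', hdiff_eq⟩ := mem_sup_span_singleton.mp hdiff
  exact mem_sup_span_singleton.mpr ⟨f, e * z + m', mem_sup_span_singleton.mpr ⟨e, m', hm', rfl⟩,
    by linear_combination hdiff_eq⟩

theorem IsWeaklyRegularMod.sup_span_mul :
    ∀ {l : List R} {N : Ideal R}, (N ⊔ span {u * v}).colon (span {u}) ≤ N ⊔ span {v} →
      IsWeaklyRegularMod (N ⊔ span {u}) l → IsWeaklyRegularMod (N ⊔ span {v}) l →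
      IsWeaklyRegularMod (N ⊔ span {u * v}) l
  | [], _, _, _, _ => trivial
  | z :: l, N, hphi, ⟨hzu, hlu⟩, ⟨hzv, hlv⟩ => by
    refine ⟨hzu.sup_span_mul hphi hzv, ?_⟩
    rw [sup_right_comm] at hlu hlv ⊢
    exact sup_span_mul (colon_sup_span_mul_le_sup_span hphi hzu) hlu hlv

theorem IsWeaklyRegularMod.cons_mul {l : List R} (hu : IsWeaklyRegularMod N (u :: l))
    (hv : IsWeaklyRegularMod N (v :: l)) : IsWeaklyRegularMod N (u * v :: l) :=
  ⟨hu.1.mul hv.1, sup_span_mul hu.1.colon_sup_span_mul_le hu.2 hv.2⟩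

theorem IsWeaklyRegularMod.cons_pow {l : List R} (hy : IsWeaklyRegularMod N (y :: l)) :
    ∀ c : ℕ, IsWeaklyRegularMod N (y ^ c :: l)
  | 0 => ⟨by simpa using isRegularMod_one, by simpa using isWeaklyRegularMod_top l⟩
  | c + 1 => by rw [pow_succ]; exact (hy.cons_pow c).cons_mul hy

theorem IsWeaklyRegularMod.map_pow (c : ℕ) :
    ∀ {l : List R} {N : Ideal R}, IsWeaklyRegularMod N l →
      IsWeaklyRegularMod N (l.map (· ^ c))
  | [], _, _ => trivial
  | _ :: _, _, h => ⟨(h.cons_pow c).1, map_pow c (h.cons_pow c).2⟩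

theorem IsWeaklyRegularMod.isRegularMod_sup_ofList :
    ∀ {l : List R} {N : Ideal R}, IsWeaklyRegularMod N (y :: l) →
      IsRegularMod (N ⊔ ofList l) y
  | [], _, h => by simpa using h.1
  | _ :: _, _, ⟨hy, hz, hl⟩ => by
    rw [ofList_cons, ← sup_assoc]
    exact isRegularMod_sup_ofList ⟨hy.sup_span_singleton hz, by rwa [sup_right_comm]⟩

theorem isWeaklyRegularMod_of_forall_take :
    ∀ {l : List R} {N : Ideal R},
      (∀ i (h : i < l.length), IsRegularMod (N ⊔ ofList (l.take i)) l[i]) →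
      IsWeaklyRegularMod N l
  | [], _, _ => trivial
  | y :: l, N, h => by
    refine ⟨?_, isWeaklyRegularMod_of_forall_take fun i hi => ?_⟩
    · have h0 : IsRegularMod (N ⊔ ofList ((y :: l).take 0)) y := h 0 (by simp)
      simpa using h0
    · have hi' : IsRegularMod (N ⊔ ofList ((y :: l).take (i + 1))) l[i] :=
        h (i + 1) (by simpa using hi)
      simpa [sup_assoc] using hi'

theorem RingTheory.Sequence.IsWeaklyRegular.isWeaklyRegularMod_bot {l : List R}
    (h : RingTheory.Sequence.IsWeaklyRegular R l) : IsWeaklyRegularMod ⊥ l :=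
  isWeaklyRegularMod_of_forall_take fun i hi r hr => by
    have := (isSMulRegular_quotient_iff_mem_of_smul_mem _ _).mp (h.regular_mod_prev i hi) r
    simpa [smul_eq_mul, mul_comm] using this (by simpa [mul_comm] using hr)

end IsWeaklyRegularMod

section Colon

variable {a b : ℕ}

theorem sup_ofList_map_pow_sub_le_colon (N : Ideal R) (l : List R) (hba : b ≤ a) :
    N ⊔ ofList (l.map (· ^ (a - b))) ≤
      (N ⊔ ofList (l.map (· ^ a))).colon (span {l.prod ^ b}) := by
  refine sup_le (fun r hr => ?_) ?_
  · rw [mem_colon_span_singleton]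
    exact mem_sup_left (N.mul_mem_right _ hr)
  · rw [ofList, span_le]
    intro _ hz
    obtain ⟨y, hy, rfl⟩ := List.mem_map.mp hz
    obtain ⟨c, hc⟩ := pow_dvd_pow_of_dvd (List.dvd_prod hy) b
    rw [SetLike.mem_coe, mem_colon_span_singleton, hc, ← mul_assoc, ← pow_add,
      Nat.sub_add_cancel hba]
    exact mem_sup_right (mul_mem_right _ _ (subset_span (List.mem_map_of_mem hy)))

theorem IsWeaklyRegularMod.colon_le (hba : b ≤ a) :
    ∀ {l : List R} {N : Ideal R}, IsWeaklyRegularMod N l →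
      (N ⊔ ofList (l.map (· ^ a))).colon (span {l.prod ^ b}) ≤
        N ⊔ ofList (l.map (· ^ (a - b)))
  | [], N, _ => by simp
  | y :: l, N, h => by
    intro r hr
    rw [mem_colon_span_singleton, List.map_cons, ofList_cons, ← sup_assoc, sup_right_comm,
      List.prod_cons, mul_pow] at hr
    have hy : IsRegularMod (N ⊔ ofList (l.map (· ^ a))) y :=
      isRegularMod_sup_ofList ⟨h.1, h.2.map_pow a⟩
    have hr' : r * l.prod ^ b ∈ N ⊔ span {y ^ (a - b)} ⊔ ofList (l.map (· ^ a)) := by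
      rw [sup_right_comm]
      exact hy.mem_sup_span_pow_sub hba (by convert hr using 1; ring)
    rw [List.map_cons, ofList_cons, ← sup_assoc]
    exact colon_le hba (h.cons_pow (a - b)).2 (mem_colon_span_singleton.mpr hr')

theorem IsWeaklyRegularMod.colon_sup_ofList_map_pow {l : List R} {N : Ideal R}
    (h : IsWeaklyRegularMod N l) (hba : b ≤ a) :
    (N ⊔ ofList (l.map (· ^ a))).colon (span {l.prod ^ b}) =
      N ⊔ ofList (l.map (· ^ (a - b))) :=
  le_antisymm (h.colon_le hba) (sup_ofList_map_pow_sub_le_colon N l hba)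

end Colon

theorem stmt17_general (R : Type) [CommRing R]
    (d : ℕ) (x : Fin d → R) (hreg : RingTheory.Sequence.IsRegular R (List.ofFn x))
    (a b : ℕ) (hab : b ≤ a) :
    (Ideal.span (Set.range fun i => x i ^ a)).colon (Ideal.span {(∏ i, x i) ^ b})
      = Ideal.span (Set.range fun i => x i ^ (a - b)) := by
  have h := hreg.isWeaklyRegularMod_bot.colon_sup_ofList_map_pow hab
  rwa [bot_sup_eq, bot_sup_eq, List.map_ofFn, List.map_ofFn, List.prod_ofFn, ofList_ofFn,
    ofList_ofFn] at h

/-- If `x₁, …, x_d` is a regular sequence in a local ring `R` and `a ≥ b ≥ 1`, then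
`(x₁^a, …, x_d^a) : (x₁ ⋯ x_d)^b = (x₁^{a-b}, …, x_d^{a-b})`. -/
theorem stmt17 (R : Type) [CommRing R] [IsLocalRing R]
    (d : ℕ) (x : Fin d → R) (hreg : RingTheory.Sequence.IsRegular R (List.ofFn x))
    (a b : ℕ) (hb : 1 ≤ b) (hab : b ≤ a) :
    (Ideal.span (Set.range fun i => x i ^ a)).colon (Ideal.span {(∏ i, x i) ^ b})
      = Ideal.span (Set.range fun i => x i ^ (a - b)) :=
  stmt17_general R d x hreg a b hab
end
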